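/- Let n ∈ ℕ and α, β > −1 be real, and define Y(θ) = (1−cos θ)^((2α+1)/4)·(1+cos θ)^((2β+1)/4)·P_n^{(α,β)}(cos θ) for θ ∈ (0,π). Then Y is twice differentiable on (0,π) and satisfies Y''(θ) + Ω(θ)Y(θ) = 0 for all θ ∈ (0,π), where Ω(θ) = L²/4 − (α² − 1/4)/(2(1 − cos θ)) − (β² − 1/4)/(2(1 + cos θ)). -/

import Mathlib

/-!
With `a = (x - 1) / 2` and `b = (x + 1) / 2`, so that `b - a = 1` and `1 - x ^ 2 = -4 a b`, the
Jacobi operator `(1 - x²) ∂² + (β - α - (α + β + 2) x) ∂ + n (n + α + β + 1)` sends `a ^ k b ^ m`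
(`k + m = n`) to `-k (k + α) a ^ (k - 1) b ^ m + m (m + β) a ^ k b ^ (m - 1)`. The binomial
coefficients of `P_n^{(α,β)}` make these contributions telescope, so `P_n^{(α,β)}` solves the
Jacobi equation.

Substituting `x = cos θ` turns that equation into `g'' + 2 r g' + μ g = 0` with
`r = (α - β + (α + β + 1) cos θ) / (2 sin θ)`. The factor
`w = (1 - cos θ) ^ ((2α + 1) / 4) (1 + cos θ) ^ ((2β + 1) / 4)` has `w' = w r`, so `Y = w g`
satisfies `Y'' + (μ - r² - r') Y = 0` (Liouville normal form), and `μ - r² - r'` is `Ω`.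
-/

open Real Filter Set

/-- Generalized binomial coefficient `C(t, k) = t(t-1)⋯(t-k+1)/k!`. -/
noncomputable def genBinom (t : ℝ) (k : ℕ) : ℝ :=
  (∏ i ∈ Finset.range k, (t - i)) / (Nat.factorial k)

/-- The Jacobi polynomial `P_n^{(α,β)}(x)`. -/
noncomputable def jacobiP (n : ℕ) (α β : ℝ) (x : ℝ) : ℝ :=
  ∑ m ∈ Finset.range (n + 1),
    genBinom (n + α) m * genBinom (n + β) (n - m) * ((x - 1) / 2) ^ (n - m) * ((x + 1) / 2) ^ m

theorem genBinom_succ_mul (t : ℝ) (k : ℕ) :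
    genBinom t (k + 1) * (k + 1) = genBinom t k * (t - k) := by
  simp only [genBinom, Finset.prod_range_succ, Nat.factorial_succ, Nat.cast_mul]
  field_simp
  push_cast
  ring

noncomputable def jacobiBasis (k m : ℕ) (x : ℝ) : ℝ := ((x - 1) / 2) ^ k * ((x + 1) / 2) ^ m

noncomputable def jacobiBasisDeriv (k m : ℕ) (x : ℝ) : ℝ :=
  (k * jacobiBasis (k - 1) m x + m * jacobiBasis k (m - 1) x) / 2

theorem hasDerivAt_jacobiBasis (k m : ℕ) (x : ℝ) :
    HasDerivAt (jacobiBasis k m) (jacobiBasisDeriv k m x) x := by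
  have ha : HasDerivAt (fun x : ℝ ↦ (x - 1) / 2) (1 / 2) x :=
    ((hasDerivAt_id x).sub_const 1).div_const 2
  have hb : HasDerivAt (fun x : ℝ ↦ (x + 1) / 2) (1 / 2) x :=
    ((hasDerivAt_id x).add_const 1).div_const 2
  refine ((ha.pow k).mul (hb.pow m)).congr_deriv ?_
  simp only [jacobiBasisDeriv, jacobiBasis, Pi.pow_apply]
  ring

theorem hasDerivAt_jacobiBasisDeriv (k m : ℕ) (x : ℝ) :
    HasDerivAt (jacobiBasisDeriv k m)
      ((k * jacobiBasisDeriv (k - 1) m x + m * jacobiBasisDeriv k (m - 1) x) / 2) x :=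
  (((hasDerivAt_jacobiBasis _ _ x).const_mul _).add
    ((hasDerivAt_jacobiBasis _ _ x).const_mul _)).div_const 2

theorem jacobiBasis_ode (α β : ℝ) (k m : ℕ) (x : ℝ) :
    (1 - x ^ 2) * ((k * jacobiBasisDeriv (k - 1) m x + m * jacobiBasisDeriv k (m - 1) x) / 2)
      + (β - α - (α + β + 2) * x) * jacobiBasisDeriv k m x
      + (k + m) * (k + m + α + β + 1) * jacobiBasis k m x
      = -(k * (k + α) * jacobiBasis (k - 1) m x) + m * (m + β) * jacobiBasis k (m - 1) x := by
  rcases k with _ | _ | k <;> rcases m with _ | _ | m <;>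
    simp only [jacobiBasisDeriv, jacobiBasis, Nat.add_sub_cancel, Nat.zero_sub] <;>
    push_cast <;> ring

noncomputable def jacobiCoeff (n : ℕ) (α β : ℝ) (m : ℕ) : ℝ :=
  genBinom (n + α) m * genBinom (n + β) (n - m)

theorem jacobiP_eq_sum (n : ℕ) (α β : ℝ) :
    jacobiP n α β =
      fun x ↦ ∑ m ∈ Finset.range (n + 1), jacobiCoeff n α β m * jacobiBasis (n - m) m x := by
  ext x
  exact Finset.sum_congr rfl fun m _ ↦ by simp only [jacobiCoeff, jacobiBasis]; ring

theorem jacobiCoeff_succ_mul (α β : ℝ) {n m : ℕ} (h : m < n) :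
    jacobiCoeff n α β (m + 1) * ((m + 1) * (m + 1 + β))
      = jacobiCoeff n α β m * ((n - m : ℕ) * ((n - m : ℕ) + α)) := by
  obtain ⟨j, rfl⟩ : ∃ j, n = m + j + 1 := ⟨n - m - 1, by omega⟩
  have hj : m + j + 1 - (m + 1) = j := by omega
  have hj' : m + j + 1 - m = j + 1 := by omega
  have hα := genBinom_succ_mul ((m + j + 1 : ℕ) + α) m
  have hβ := genBinom_succ_mul ((m + j + 1 : ℕ) + β) j
  simp only [jacobiCoeff, hj, hj']
  push_cast at hα hβ ⊢
  linear_combination (genBinom (m + j + 1 + β) j * (m + 1 + β)) * hα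
    - (genBinom (m + j + 1 + α) m * (j + 1 + α)) * hβ

theorem hasDerivAt_jacobiP (n : ℕ) (α β x : ℝ) :
    HasDerivAt (jacobiP n α β)
      (∑ m ∈ Finset.range (n + 1), jacobiCoeff n α β m * jacobiBasisDeriv (n - m) m x) x := by
  rw [jacobiP_eq_sum]
  exact HasDerivAt.fun_sum fun m _ ↦ (hasDerivAt_jacobiBasis _ _ x).const_mul _

theorem hasDerivAt_deriv_jacobiP (n : ℕ) (α β x : ℝ) :
    HasDerivAt (deriv (jacobiP n α β))
      (∑ m ∈ Finset.range (n + 1), jacobiCoeff n α β m *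
        (((n - m : ℕ) * jacobiBasisDeriv (n - m - 1) m x
          + m * jacobiBasisDeriv (n - m) (m - 1) x) / 2)) x := by
  rw [show deriv (jacobiP n α β) = _ from funext fun x ↦ (hasDerivAt_jacobiP n α β x).deriv]
  exact HasDerivAt.fun_sum fun m _ ↦ (hasDerivAt_jacobiBasisDeriv _ _ x).const_mul _

theorem sum_jacobiCoeff_telescope (n : ℕ) (α β x : ℝ) :
    ∑ m ∈ Finset.range (n + 1),
      (m * (m + β) * jacobiCoeff n α β m * jacobiBasis (n - m) (m - 1) x
        - jacobiCoeff n α β m * ((n - m : ℕ) * ((n - m : ℕ) + α)) * jacobiBasis (n - m - 1) m x)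
      = 0 := by
  rw [Finset.sum_sub_distrib, Finset.sum_range_succ', Finset.sum_range_succ _ n]
  simp only [Nat.sub_self, CharP.cast_eq_zero, zero_mul, mul_zero, add_zero, sub_eq_zero]
  refine Finset.sum_congr rfl fun m hm ↦ ?_
  rw [Nat.add_sub_cancel, Nat.sub_sub]
  push_cast
  linear_combination
    jacobiBasis (n - (m + 1)) m x * jacobiCoeff_succ_mul α β (Finset.mem_range.mp hm)

theorem jacobiP_ode (n : ℕ) (α β x : ℝ) :
    (1 - x ^ 2) * deriv (deriv (jacobiP n α β)) x
      + (β - α - (α + β + 2) * x) * deriv (jacobiP n α β) x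
      + n * (n + α + β + 1) * jacobiP n α β x = 0 := by
  rw [(hasDerivAt_deriv_jacobiP n α β x).deriv, (hasDerivAt_jacobiP n α β x).deriv,
    jacobiP_eq_sum]
  simp only [Finset.mul_sum, ← Finset.sum_add_distrib]
  refine (Finset.sum_congr rfl fun m hm ↦ ?_).trans (sum_jacobiCoeff_telescope n α β x)
  have hn : (n : ℝ) = (n - m : ℕ) + m := by
    rw [Nat.cast_sub (Nat.lt_succ_iff.mp (Finset.mem_range.mp hm))]
    ring
  rw [hn]
  linear_combination jacobiCoeff n α β m * jacobiBasis_ode α β (n - m) m x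

theorem liouville_normal_form {U : Set ℝ} (hU : IsOpen U) {Y w r r' g g' g'' q : ℝ → ℝ}
    (hY : ∀ θ ∈ U, Y θ = w θ * g θ)
    (hw : ∀ θ ∈ U, HasDerivAt w (w θ * r θ) θ) (hr : ∀ θ ∈ U, HasDerivAt r (r' θ) θ)
    (hg : ∀ θ ∈ U, HasDerivAt g (g' θ) θ) (hg' : ∀ θ ∈ U, HasDerivAt g' (g'' θ) θ)
    (hode : ∀ θ ∈ U, g'' θ + 2 * r θ * g' θ + q θ * g θ = 0) {θ : ℝ} (hθ : θ ∈ U) :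
    DifferentiableAt ℝ Y θ ∧ DifferentiableAt ℝ (deriv Y) θ ∧
      deriv (deriv Y) θ + (q θ - r θ ^ 2 - r' θ) * Y θ = 0 := by
  have hY' : ∀ t ∈ U, HasDerivAt Y (w t * (r t * g t + g' t)) t := fun t ht ↦
    (((hw t ht).mul (hg t ht)).congr_of_eventuallyEq
      (eventually_of_mem (hU.mem_nhds ht) hY)).congr_deriv (by ring)
  have hY'' : HasDerivAt (deriv Y)
      (w θ * r θ * (r θ * g θ + g' θ) + w θ * (r' θ * g θ + r θ * g' θ + g'' θ)) θ :=
    ((hw θ hθ).mul (((hr θ hθ).mul (hg θ hθ)).add (hg' θ hθ))).congr_of_eventuallyEq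
      (eventually_of_mem (hU.mem_nhds hθ) fun t ht ↦ (hY' t ht).deriv)
  refine ⟨(hY' θ hθ).differentiableAt, hY''.differentiableAt, ?_⟩
  rw [hY''.deriv, hY θ hθ]
  linear_combination w θ * hode θ hθ

theorem one_sub_cos_pos_and_one_add_cos_pos {θ : ℝ} (hθ : θ ∈ Ioo 0 π) :
    0 < 1 - cos θ ∧ 0 < 1 + cos θ := by
  have h1 := cos_lt_cos_of_nonneg_of_le_pi le_rfl hθ.2.le hθ.1
  have h2 := cos_lt_cos_of_nonneg_of_le_pi hθ.1.le le_rfl hθ.2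
  rw [cos_zero] at h1
  rw [cos_pi] at h2
  constructor <;> linarith

noncomputable def liouvilleFactor (α β θ : ℝ) : ℝ :=
  (1 - cos θ) ^ ((2 * α + 1) / 4) * (1 + cos θ) ^ ((2 * β + 1) / 4)

theorem hasDerivAt_liouvilleFactor (α β : ℝ) {θ : ℝ} (hθ : θ ∈ Ioo 0 π) :
    HasDerivAt (liouvilleFactor α β)
      (liouvilleFactor α β θ * ((α - β + (α + β + 1) * cos θ) / (2 * sin θ))) θ := by
  obtain ⟨hm, hp⟩ := one_sub_cos_pos_and_one_add_cos_pos hθ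
  have hsin : sin θ ≠ 0 := (sin_pos_of_pos_of_lt_pi hθ.1 hθ.2).ne'
  have hA := ((hasDerivAt_cos θ).const_sub 1).rpow_const (p := (2 * α + 1) / 4) (Or.inl hm.ne')
  have hB := ((hasDerivAt_cos θ).const_add 1).rpow_const (p := (2 * β + 1) / 4) (Or.inl hp.ne')
  refine (hA.mul hB).congr_deriv ?_
  rw [liouvilleFactor, rpow_sub_one hm.ne', rpow_sub_one hp.ne']
  field_simp
  linear_combination 4 * (α - β + (α + β + 1) * cos θ) * sin_sq θ

theorem hasDerivAt_logDeriv_liouvilleFactor (α β : ℝ) {θ : ℝ} (hθ : sin θ ≠ 0) :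
    HasDerivAt (fun θ ↦ (α - β + (α + β + 1) * cos θ) / (2 * sin θ))
      (-(α + β + 1) / 2 - (α - β + (α + β + 1) * cos θ) * cos θ / (2 * sin θ ^ 2)) θ := by
  have hN := ((hasDerivAt_cos θ).const_mul (α + β + 1)).const_add (α - β)
  refine (hN.div ((hasDerivAt_sin θ).const_mul 2) (mul_ne_zero two_ne_zero hθ)).congr_deriv ?_
  field_simp

theorem liouville_of_jacobi_ode {α β μ : ℝ} {f : ℝ → ℝ} (hf : Differentiable ℝ f)
    (hf' : Differentiable ℝ (deriv f))
    (hode : ∀ x, (1 - x ^ 2) * deriv (deriv f) x + (β - α - (α + β + 2) * x) * deriv f x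
      + μ * f x = 0)
    {Y : ℝ → ℝ} (hY : ∀ θ ∈ Ioo 0 π, Y θ = liouvilleFactor α β θ * f (cos θ))
    {θ : ℝ} (hθ : θ ∈ Ioo 0 π) :
    DifferentiableAt ℝ Y θ ∧ DifferentiableAt ℝ (deriv Y) θ ∧
      deriv (deriv Y) θ + (μ + (α + β + 1) ^ 2 / 4 - (α ^ 2 - 1 / 4) / (2 * (1 - cos θ))
        - (β ^ 2 - 1 / 4) / (2 * (1 + cos θ))) * Y θ = 0 := by
  have hsin : ∀ t ∈ Ioo 0 π, sin t ≠ 0 := fun t ht ↦ (sin_pos_of_pos_of_lt_pi ht.1 ht.2).ne'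
  obtain ⟨hm, hp⟩ := one_sub_cos_pos_and_one_add_cos_pos hθ
  have key := liouville_normal_form (g' := fun t ↦ -sin t * deriv f (cos t))
    (g'' := fun t ↦ sin t ^ 2 * deriv (deriv f) (cos t) - cos t * deriv f (cos t))
    (q := fun _ ↦ μ) isOpen_Ioo hY (fun t ht ↦ hasDerivAt_liouvilleFactor α β ht)
    (fun t ht ↦ hasDerivAt_logDeriv_liouvilleFactor α β (hsin t ht))
    (fun t _ ↦ ((hf (cos t)).hasDerivAt.comp t (hasDerivAt_cos t)).congr_deriv (by ring))
    (fun t _ ↦ (((hasDerivAt_sin t).neg.mul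
      ((hf' (cos t)).hasDerivAt.comp t (hasDerivAt_cos t)))).congr_deriv
        (by simp only [Function.comp_apply, Pi.neg_apply]; ring))
    (fun t ht ↦ by
      field_simp [hsin t ht]
      linear_combination hode (cos t) + deriv (deriv f) (cos t) * sin_sq t)
    hθ
  refine ⟨key.1, key.2.1, ?_⟩
  convert key.2.2 using 3
  have hs2 : sin θ ^ 2 = (1 - cos θ) * (1 + cos θ) := by rw [sin_sq]; ring
  rw [div_pow, mul_pow, hs2]
  field_simp
  ring

theorem stmt3_general (n : ℕ) (α β : ℝ)
    (Y : ℝ → ℝ)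
    (hY : ∀ θ ∈ Set.Ioo 0 Real.pi,
      Y θ = (1 - Real.cos θ) ^ ((2 * α + 1) / 4) * (1 + Real.cos θ) ^ ((2 * β + 1) / 4) *
        jacobiP n α β (Real.cos θ))
    (L : ℝ) (hL : L = 2 * n + α + β + 1)
    (Ω : ℝ → ℝ)
    (hΩ : ∀ θ ∈ Set.Ioo 0 Real.pi,
      Ω θ = L ^ 2 / 4 - (α ^ 2 - 1 / 4) / (2 * (1 - Real.cos θ))
        - (β ^ 2 - 1 / 4) / (2 * (1 + Real.cos θ))) :
    (∀ θ ∈ Set.Ioo 0 Real.pi, DifferentiableAt ℝ Y θ ∧ DifferentiableAt ℝ (deriv Y) θ) ∧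
    ∀ θ ∈ Set.Ioo 0 Real.pi, deriv (deriv Y) θ + Ω θ * Y θ = 0 := by
  have hY' : ∀ θ ∈ Ioo 0 π, Y θ = liouvilleFactor α β θ * jacobiP n α β (cos θ) :=
    fun θ hθ ↦ by rw [hY θ hθ, liouvilleFactor]
  have hsol := fun θ (hθ : θ ∈ Ioo 0 π) ↦ liouville_of_jacobi_ode
    (fun x ↦ (hasDerivAt_jacobiP n α β x).differentiableAt)
    (fun x ↦ (hasDerivAt_deriv_jacobiP n α β x).differentiableAt) (jacobiP_ode n α β) hY' hθ
  refine ⟨fun θ hθ ↦ ⟨(hsol θ hθ).1, (hsol θ hθ).2.1⟩, fun θ hθ ↦ ?_⟩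
  rw [hΩ θ hθ, hL]
  convert (hsol θ hθ).2.2 using 4
  ring

theorem stmt3 (n : ℕ) (α β : ℝ) (hα : -1 < α) (hβ : -1 < β)
    (Y : ℝ → ℝ)
    (hY : ∀ θ ∈ Set.Ioo 0 Real.pi,
      Y θ = (1 - Real.cos θ) ^ ((2 * α + 1) / 4) * (1 + Real.cos θ) ^ ((2 * β + 1) / 4) *
        jacobiP n α β (Real.cos θ))
    (L : ℝ) (hL : L = 2 * n + α + β + 1)
    (Ω : ℝ → ℝ)
    (hΩ : ∀ θ ∈ Set.Ioo 0 Real.pi,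
      Ω θ = L ^ 2 / 4 - (α ^ 2 - 1 / 4) / (2 * (1 - Real.cos θ))
        - (β ^ 2 - 1 / 4) / (2 * (1 + Real.cos θ))) :
    (∀ θ ∈ Set.Ioo 0 Real.pi, DifferentiableAt ℝ Y θ ∧ DifferentiableAt ℝ (deriv Y) θ) ∧
    ∀ θ ∈ Set.Ioo 0 Real.pi, deriv (deriv Y) θ + Ω θ * Y θ = 0 :=
  stmt3_general n α β Y hY L hL Ω hΩ
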